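/- arXiv:0807.4130 — 5 statements merged into one kernel-verified Lean document; each statement's English description precedes it below -/
import Mathlib

section
/- Let T be a positive linear functional defined on a linear subspace of functions S → ℝ containing all convex functions, such that T(A) = (1/vol(S)) ∫_S A(x) dx for every affine function A : S → ℝ. Then for every convex function f : S → ℝ, f(p̄) ≤ T(f) ≤ (1/(n+1)) ∑ᵢ₌₀ⁿ f(pᵢ). -/
/-!
Both bounds compare `f` with an affine function on the simplex and apply the positivity of `T`.
Above, `f` is dominated by its affine interpolant at the vertices (Jensen's inequality in
barycentric coordinates). Below, `p̄` is an interior point, so a hyperplane supporting the strict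
epigraph of `f` over the interior (Hahn–Banach) is the graph of an affine minorant of `f` touching
it at `p̄`. What makes the two bounds meet is that `T` sends an affine `A` to its mean over the
simplex, which is both `A p̄` and the vertex average of `A`: the barycentric coordinates all have
the same integral, because an affine map permuting the vertices maps the simplex onto itself and
therefore has Jacobian `±1`.
-/

open MeasureTheory Set Finset

theorem Finset.centroid_eq_inv_card_smul_sum {ι k V : Type*} [Field k] [CharZero k]
    [AddCommGroup V] [Module k V] {s : Finset ι} (hs : s.Nonempty) (p : ι → V) :
    s.centroid k p = (#s : k)⁻¹ • ∑ i ∈ s, p i := by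
  rw [centroid_def, affineCombination_eq_linear_combination _ _ _
    (sum_centroidWeights_eq_one_of_nonempty k s hs), smul_sum]
  simp only [centroidWeights_apply]

theorem AffineMap.map_centroid {ι k V₁ P₁ V₂ P₂ : Type*} [Field k] [CharZero k]
    [AddCommGroup V₁] [Module k V₁] [AddTorsor V₁ P₁] [AddCommGroup V₂] [Module k V₂]
    [AddTorsor V₂ P₂] (A : P₁ →ᵃ[k] P₂) {s : Finset ι} (hs : s.Nonempty) (p : ι → P₁) :
    A (s.centroid k p) = s.centroid k (A ∘ p) :=
  map_affineCombination _ _ _ (sum_centroidWeights_eq_one_of_nonempty k s hs) A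

theorem AffineMap.convexOn {𝕜 E β : Type*} [Field 𝕜] [LinearOrder 𝕜] [IsStrictOrderedRing 𝕜]
    [AddCommGroup E] [Module 𝕜 E] [AddCommGroup β] [PartialOrder β] [Module 𝕜 β]
    (A : E →ᵃ[𝕜] β) {s : Set E} (hs : Convex 𝕜 s) : ConvexOn 𝕜 s A :=
  ⟨hs, fun _ _ _ _ _ _ _ _ hab => (Convex.combo_affine_apply hab).le⟩

namespace AffineBasis

variable {ι : Type*} [Fintype ι]

section Ring

variable {k V P : Type*} [Ring k] [AddCommGroup V] [Module k V] [AddTorsor V P]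
  (b : AffineBasis ι k P)

theorem affineMap_apply_eq_sum_coord_smul {W : Type*} [AddCommGroup W] [Module k W]
    (A : P →ᵃ[k] W) (x : P) : A x = ∑ i, b.coord i x • A (b i) := by
  conv_lhs => rw [← b.affineCombination_coord_eq_self x]
  rw [map_affineCombination _ _ _ (b.sum_coord_apply_eq_one x),
    affineCombination_eq_linear_combination _ _ _ (b.sum_coord_apply_eq_one x)]
  rfl

noncomputable def permute (σ : Equiv.Perm ι) : P →ᵃ[k] P :=
  (univ.affineCombination k (b.reindex σ.symm)).comp b.coords

theorem coord_permute (σ : Equiv.Perm ι) (i : ι) (x : P) :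
    b.coord (σ i) (b.permute σ x) = b.coord i x := by
  have := (b.reindex σ.symm).coord_apply_combination_of_mem (mem_univ i)
    (b.sum_coord_apply_eq_one x)
  rwa [coord_reindex, Equiv.symm_symm] at this

theorem permute_injective (σ : Equiv.Perm ι) : Function.Injective (b.permute σ) :=
  fun x y h => b.ext_elem fun i => by rw [← b.coord_permute σ, h, b.coord_permute]

theorem permute_apply_self (σ : Equiv.Perm ι) (i : ι) : b.permute σ (b i) = b (σ i) := by
  classical
  refine b.ext_elem fun j => ?_
  obtain ⟨j, rfl⟩ := σ.surjective j
  rw [coord_permute, coord_apply, coord_apply, σ.injective.eq_iff]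

end Ring

theorem image_permute_convexHull {k E : Type*} [Ring k] [PartialOrder k] [AddCommGroup E]
    [Module k E] (b : AffineBasis ι k E) (σ : Equiv.Perm ι) :
    b.permute σ '' convexHull k (range b) = convexHull k (range b) := by
  rw [AffineMap.image_convexHull, ← range_comp,
    show ⇑(b.permute σ) ∘ b = b ∘ σ from funext (b.permute_apply_self σ), σ.surjective.range_comp]

section CommRing

variable {k V P : Type*} [CommRing k] [AddCommGroup V] [Module k V] [AddTorsor V P]
  (b : AffineBasis ι k P)

noncomputable def interpolant (y : ι → k) : P →ᵃ[k] k :=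
  (Fintype.linearCombination k y).toAffineMap.comp b.coords

theorem interpolant_apply (y : ι → k) (x : P) : b.interpolant y x = ∑ i, b.coord i x * y i := by
  simp [interpolant, Fintype.linearCombination_apply]

theorem interpolant_apply_self (y : ι → k) (j : ι) : b.interpolant y (b j) = y j := by
  classical
  simp [interpolant_apply, coord_apply]

end CommRing

theorem _root_.ConvexOn.le_interpolant {k E : Type*} [Field k] [LinearOrder k]
    [IsStrictOrderedRing k] [AddCommGroup E] [Module k E] (b : AffineBasis ι k E) {f : E → k}
    (hf : ConvexOn k (convexHull k (range b)) f)
    {x : E} (hx : x ∈ convexHull k (range b)) : f x ≤ b.interpolant (f ∘ b) x := by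
  rw [b.convexHull_eq_nonneg_coord] at hx
  rw [interpolant_apply]
  have := hf.map_sum_le (t := univ) (fun i _ => hx i) (b.sum_coord_apply_eq_one x)
    (fun i _ => subset_convexHull k _ (mem_range_self i))
  rwa [b.linear_combination_coord_eq_self] at this

end AffineBasis

section SupportingHyperplane

variable {E : Type*} [NormedAddCommGroup E] [NormedSpace ℝ E] [FiniteDimensional ℝ E]
  {s : Set E} {f : E → ℝ} {x₀ : E}

theorem ConvexOn.exists_affineMap_le_on_interior (hf : ConvexOn ℝ s f) (hx₀ : x₀ ∈ interior s) :
    ∃ A : E →ᵃ[ℝ] ℝ, A x₀ = f x₀ ∧ ∀ x ∈ interior s, A x ≤ f x := by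
  set U : Set (E × ℝ) := {q | q.1 ∈ interior s ∧ f q.1 < q.2}
  have hU_convex : Convex ℝ U := (hf.subset interior_subset hf.1.interior).convex_strict_epigraph
  have hU_open : IsOpen U := by
    have := ((hf.continuousOn_interior.comp continuousOn_fst fun q hq => hq.1).prodMk
      continuousOn_snd).isOpen_inter_preimage (isOpen_interior.prod isOpen_univ)
      (isOpen_lt continuous_fst continuous_snd)
    convert this using 1
    ext q
    simp [U]
  obtain ⟨l, hl⟩ := geometric_hahn_banach_open_point hU_convex hU_open
    (x := (x₀, f x₀)) fun h => lt_irrefl _ h.2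
  set c := l (0, 1)
  have hl_apply : ∀ x t, l (x, t) = l (x, 0) + t * c := fun x t => by
    rw [← smul_eq_mul, ← l.map_smul, ← map_add]
    simp
  have hc : c < 0 := by
    have := hl (x₀, f x₀ + 1) ⟨hx₀, lt_add_one _⟩
    rw [hl_apply, hl_apply x₀ (f x₀)] at this
    linarith
  -- the graph of `A` is the hyperplane `l = l (x₀, f x₀)`, which is not vertical as `c ≠ 0`
  let A : E →ᵃ[ℝ] ℝ := c⁻¹ • (AffineMap.const ℝ E (l (x₀, f x₀)) -
    (l.comp (ContinuousLinearMap.inl ℝ E ℝ)).toLinearMap.toAffineMap)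
  have hA : ∀ x, A x = (l (x₀, f x₀) - l (x, 0)) / c := fun x => by
    simp [A, div_eq_inv_mul]
  refine ⟨A, ?_, fun x hx => ?_⟩
  · rw [hA, hl_apply x₀ (f x₀), add_sub_cancel_left, mul_div_cancel_right₀ _ hc.ne]
  · rw [hA]
    refine le_of_forall_gt_imp_ge_of_dense fun t ht => ?_
    have := hl (x, t) ⟨hx, ht⟩
    rw [hl_apply] at this
    rw [div_le_iff_of_neg hc]
    linarith

theorem ConvexOn.exists_affineMap_le_of_mem_interior (hf : ConvexOn ℝ s f)
    (hx₀ : x₀ ∈ interior s) : ∃ A : E →ᵃ[ℝ] ℝ, A x₀ = f x₀ ∧ ∀ x ∈ s, A x ≤ f x := by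
  obtain ⟨A, hA₀, hA⟩ := hf.exists_affineMap_le_on_interior hx₀
  refine ⟨A, hA₀, fun x hx => ?_⟩
  have hhalf : (2⁻¹ : ℝ) + 2⁻¹ = 1 := by norm_num
  have hmid : (2⁻¹ : ℝ) • x₀ + (2⁻¹ : ℝ) • x ∈ interior s :=
    hf.1.combo_interior_closure_mem_interior hx₀ (subset_closure hx) (by norm_num) (by norm_num)
      hhalf
  have hf_mid := hf.2 (interior_subset hx₀) hx (by norm_num) (by norm_num) hhalf
  have hA_mid := hA _ hmid
  rw [Convex.combo_affine_apply hhalf, hA₀] at hA_mid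
  simp only [smul_eq_mul] at hf_mid hA_mid
  linarith

end SupportingHyperplane

section Integral

variable {E F : Type*} [NormedAddCommGroup E] [NormedSpace ℝ E] [FiniteDimensional ℝ E]
  [MeasurableSpace E] [BorelSpace E] [NormedAddCommGroup F] [NormedSpace ℝ F] (μ : Measure E)

theorem ContinuousAffineMap.setIntegral_comp_of_image_eq [μ.IsAddHaarMeasure] {s : Set E}
    (hs : MeasurableSet s) (hμs₀ : μ s ≠ 0) (hμs : μ s ≠ ⊤) (φ : E →ᴬ[ℝ] E)
    (hφ : Function.Injective φ) (hφs : φ '' s = s) (g : E → F) :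
    ∫ x in s, g (φ x) ∂μ = ∫ x in s, g x ∂μ := by
  have hφ' : ∀ x ∈ s, HasFDerivWithinAt φ φ.contLinear s x := fun x _ => φ.hasFDerivWithinAt
  have hdet : |φ.contLinear.det| = 1 := by
    have hvol := integral_image_eq_integral_abs_det_fderiv_smul μ hs hφ' hφ.injOn fun _ => (1 : ℝ)
    simp only [hφs, setIntegral_const, smul_eq_mul, mul_one] at hvol
    exact (mul_eq_left₀ (ENNReal.toReal_pos hμs₀ hμs).ne').mp hvol.symm
  conv_rhs => rw [← hφs]
  rw [integral_image_eq_integral_abs_det_fderiv_smul μ hs hφ' hφ.injOn, hdet]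
  simp only [one_smul]

theorem AffineMap.integrableOn_of_isCompact [IsFiniteMeasureOnCompacts μ] (A : E →ᵃ[ℝ] F)
    {s : Set E} (hs : IsCompact s) : IntegrableOn A s μ :=
  A.continuous_of_finiteDimensional.continuousOn.integrableOn_compact hs

end Integral

theorem AffineBasis.measure_convexHull_ne_zero {ι E : Type*} [Fintype ι] [NormedAddCommGroup E]
    [NormedSpace ℝ E] [MeasurableSpace E] (μ : Measure E) [μ.IsOpenPosMeasure]
    (b : AffineBasis ι ℝ E) : μ (convexHull ℝ (range b)) ≠ 0 :=
  (Measure.measure_pos_of_nonempty_interior μ ⟨_, b.centroid_mem_interior_convexHull⟩).ne'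

namespace AffineBasis

variable {ι E : Type*} [Fintype ι] [NormedAddCommGroup E] [NormedSpace ℝ E]
  [FiniteDimensional ℝ E] [MeasurableSpace E] [BorelSpace E] (μ : Measure E) [μ.IsAddHaarMeasure]
  (b : AffineBasis ι ℝ E)

theorem setIntegral_coord_convexHull (i : ι) :
    ∫ x in convexHull ℝ (range b), b.coord i x ∂μ =
      (Fintype.card ι : ℝ)⁻¹ * μ.real (convexHull ℝ (range b)) := by
  classical
  have := b.nonempty
  set S := convexHull ℝ (range b)
  have hS : IsCompact S := (finite_range b).isCompact_convexHull ℝ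
  have hcoord_eq : ∀ j, ∫ x in S, b.coord j x ∂μ = ∫ x in S, b.coord i x ∂μ := by
    intro j
    let φ : E →ᴬ[ℝ] E := ⟨b.permute (Equiv.swap j i), (b.permute _).continuous_of_finiteDimensional⟩
    have hφ : ∀ x, b.coord i (φ x) = b.coord j x := fun x => by
      simpa [φ] using b.coord_permute (Equiv.swap j i) j x
    simp_rw [← hφ]
    exact φ.setIntegral_comp_of_image_eq μ hS.isClosed.measurableSet
      (b.measure_convexHull_ne_zero μ) hS.measure_lt_top.ne (b.permute_injective _)
      (b.image_permute_convexHull _) _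
  have hsum : ∑ j, ∫ x in S, b.coord j x ∂μ = μ.real S := by
    rw [← integral_finsetSum _ fun j _ => (b.coord j).integrableOn_of_isCompact μ hS]
    simp [b.sum_coord_apply_eq_one]
  have hcard : (Fintype.card ι : ℝ) ≠ 0 := Nat.cast_ne_zero.mpr Fintype.card_ne_zero
  rw [← hsum, sum_congr rfl fun j _ => hcoord_eq j, sum_const, card_univ, nsmul_eq_mul,
    inv_mul_cancel_left₀ hcard]

theorem setAverage_affineMap_convexHull (A : E →ᵃ[ℝ] ℝ) :
    ⨍ x in convexHull ℝ (range b), A x ∂μ = (Fintype.card ι : ℝ)⁻¹ * ∑ i, A (b i) := by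
  have hS : IsCompact (convexHull ℝ (range b)) := (finite_range b).isCompact_convexHull ℝ
  have hμS : μ.real (convexHull ℝ (range b)) ≠ 0 :=
    (ENNReal.toReal_pos (b.measure_convexHull_ne_zero μ) hS.measure_lt_top.ne).ne'
  have hA : ∀ x, A x = ∑ i, b.coord i x * A (b i) := by
    simpa only [smul_eq_mul] using b.affineMap_apply_eq_sum_coord_smul A
  rw [setAverage_eq, smul_eq_mul, integral_congr_ae (ae_of_all _ hA),
    integral_finsetSum _ fun i _ => ((b.coord i).integrableOn_of_isCompact μ hS).mul_const _,
    sum_congr rfl fun i _ => by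
      rw [MeasureTheory.integral_mul_const, b.setIntegral_coord_convexHull μ],
    ← mul_sum]
  field_simp

end AffineBasis

theorem hermite_hadamard_functional {n : ℕ}
    (p : Fin (n + 1) → EuclideanSpace ℝ (Fin n)) (hp : AffineIndependent ℝ p)
    (S : Set (EuclideanSpace ℝ (Fin n))) (hS : S = convexHull ℝ (Set.range p))
    (pbar : EuclideanSpace ℝ (Fin n)) (hpbar : pbar = ((n : ℝ) + 1)⁻¹ • ∑ i, p i)
    (X : Submodule ℝ (EuclideanSpace ℝ (Fin n) → ℝ))
    (hX : ∀ f : EuclideanSpace ℝ (Fin n) → ℝ, ConvexOn ℝ S f → f ∈ X)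
    (T : X →ₗ[ℝ] ℝ)
    (Tpos : ∀ f g : X, (∀ x ∈ S, (f : EuclideanSpace ℝ (Fin n) → ℝ) x ≤ (g : EuclideanSpace ℝ (Fin n) → ℝ) x) → T f ≤ T g)
    (Taff : ∀ (A : EuclideanSpace ℝ (Fin n) →ᵃ[ℝ] ℝ) (hA : ⇑A ∈ X),
      T ⟨A, hA⟩ = ((volume S).toReal)⁻¹ * ∫ x in S, A x)
    (f : EuclideanSpace ℝ (Fin n) → ℝ) (hf : ConvexOn ℝ S f) :
    f pbar ≤ T ⟨f, hX f hf⟩ ∧ T ⟨f, hX f hf⟩ ≤ ((n : ℝ) + 1)⁻¹ * ∑ i, f (p i) := by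
  subst hS
  obtain ⟨b, rfl⟩ : ∃ b : AffineBasis (Fin (n + 1)) ℝ (EuclideanSpace ℝ (Fin n)), ⇑b = p :=
    ⟨⟨p, hp, hp.affineSpan_eq_top_iff_card_eq_finrank_add_one.mpr (by simp)⟩, rfl⟩
  have hcard : (#(univ : Finset (Fin (n + 1))) : ℝ) = n + 1 := by simp
  have hcentroid : pbar = univ.centroid ℝ b := by
    rw [univ.centroid_eq_inv_card_smul_sum univ_nonempty, hpbar, hcard]
  have hX_affine : ∀ A : EuclideanSpace ℝ (Fin n) →ᵃ[ℝ] ℝ, ⇑A ∈ X :=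
    fun A => hX A (A.convexOn (convex_convexHull ℝ _))
  have hT : ∀ A : EuclideanSpace ℝ (Fin n) →ᵃ[ℝ] ℝ,
      T ⟨A, hX_affine A⟩ = ((n : ℝ) + 1)⁻¹ * ∑ i, A (b i) := by
    intro A
    rw [Taff, ← smul_eq_mul, ← measureReal_def, ← setAverage_eq,
      b.setAverage_affineMap_convexHull volume, ← card_univ, hcard]
  constructor
  · obtain ⟨A, hA_eq, hA_le⟩ := hf.exists_affineMap_le_of_mem_interior
      (hcentroid ▸ b.centroid_mem_interior_convexHull)
    calc f pbar = A (univ.centroid ℝ b) := by rw [← hA_eq, hcentroid]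
      _ = ((n : ℝ) + 1)⁻¹ * ∑ i, A (b i) := by
        rw [A.map_centroid univ_nonempty, univ.centroid_eq_inv_card_smul_sum univ_nonempty, hcard,
          smul_eq_mul, Function.comp_def]
      _ = T ⟨A, hX_affine A⟩ := (hT A).symm
      _ ≤ T ⟨f, hX f hf⟩ := Tpos _ _ hA_le
  · let B := b.interpolant (f ∘ b)
    calc T ⟨f, hX f hf⟩ ≤ T ⟨B, hX_affine B⟩ := Tpos _ _ fun x hx => hf.le_interpolant b hx
      _ = ((n : ℝ) + 1)⁻¹ * ∑ i, f (b i) := by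
        simp only [hT, B, b.interpolant_apply_self, Function.comp_apply]
end

section
/- Let λ₁,…,λ_m ≥ 0 with ∑λᵢ = 1, and ξ₁,…,ξ_m ∈ S with ∑λᵢξᵢ = p̄ (the barycenter of the simplex S). Then for every convex f : S → ℝ, f(p̄) ≤ ∑ᵢ₌₁^m λᵢ f(ξᵢ) ≤ (1/(n+1)) ∑ᵢ₌₀ⁿ f(pᵢ). -/
theorem hermite_hadamard_combination {n m : ℕ}
    (p : Fin (n + 1) → EuclideanSpace ℝ (Fin n)) (hp : AffineIndependent ℝ p)
    (S : Set (EuclideanSpace ℝ (Fin n))) (hS : S = convexHull ℝ (Set.range p))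
    (pbar : EuclideanSpace ℝ (Fin n)) (hpbar : pbar = ((n : ℝ) + 1)⁻¹ • ∑ i, p i)
    (lam : Fin m → ℝ) (hlam : ∀ i, 0 ≤ lam i) (hsum : ∑ i, lam i = 1)
    (xi : Fin m → EuclideanSpace ℝ (Fin n)) (hxi : ∀ i, xi i ∈ S)
    (hbar : ∑ i, lam i • xi i = pbar)
    (f : EuclideanSpace ℝ (Fin n) → ℝ) (hf : ConvexOn ℝ S f) :
    f pbar ≤ ∑ i, lam i * f (xi i) ∧
      ∑ i, lam i * f (xi i) ≤ ((n : ℝ) + 1)⁻¹ * ∑ i, f (p i) := by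
  have hpmem : ∀ j, p j ∈ S := fun j => by
    rw [hS]; exact subset_convexHull ℝ _ ⟨j, rfl⟩
  constructor
  · rw [← hbar]
    exact hf.map_sum_le (fun i _ => hlam i) hsum (fun i _ => hxi i)
  · -- barycentric coordinates for each ξᵢ
    have hmu : ∀ i, ∃ w : Fin (n+1) → ℝ, (∀ j, 0 ≤ w j) ∧ ∑ j, w j = 1 ∧
        ∑ j, w j • p j = xi i := by
      intro i
      have := hxi i
      rw [hS, convexHull_range_eq_exists_affineCombination] at this
      obtain ⟨s, w, hw0, hw1, hwc⟩ := this
      have hind : ∀ g : Fin (n+1) → ℝ, ∑ j, Set.indicator (↑s : Set (Fin (n+1))) g j = ∑ j ∈ s, g j := by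
        intro g
        calc ∑ j, Set.indicator (↑s : Set (Fin (n+1))) g j
            = ∑ j ∈ s, Set.indicator (↑s : Set (Fin (n+1))) g j :=
              (Finset.sum_subset (Finset.subset_univ s)
                (fun j _ hj => Set.indicator_of_notMem hj g)).symm
          _ = ∑ j ∈ s, g j := Finset.sum_congr rfl fun j hj => Set.indicator_of_mem hj g
      refine ⟨Set.indicator ↑s w, fun j => Set.indicator_apply_nonneg (hw0 j), ?_, ?_⟩
      · rw [hind]; exact hw1
      · have h1 : ∑ j, Set.indicator (↑s : Set (Fin (n+1))) w j = 1 := by rw [hind]; exact hw1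
        rw [← Finset.affineCombination_eq_linear_combination _ _ _ h1,
          ← Finset.affineCombination_indicator_subset w p (Finset.subset_univ s), hwc]
    choose mu hmu0 hmu1 hmuc using hmu
    set c : Fin (n+1) → ℝ := fun j => ∑ i, lam i * mu i j with hc
    have hc0 : ∀ j, 0 ≤ c j := fun j =>
      Finset.sum_nonneg fun i _ => mul_nonneg (hlam i) (hmu0 i j)
    have hc1 : ∑ j, c j = 1 := by
      rw [Finset.sum_comm]
      simp_rw [← Finset.mul_sum]
      simp_rw [hmu1]
      simpa using hsum
    have hcc : ∑ j, c j • p j = pbar := by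
      rw [← hbar]
      simp_rw [hc, Finset.sum_smul, mul_smul]
      rw [Finset.sum_comm]
      congr 1; ext i
      rw [← Finset.smul_sum, hmuc]
    -- uniqueness of barycentric coordinates
    have hw0sum : ∑ j : Fin (n+1), ((n : ℝ) + 1)⁻¹ = 1 := by
      simp [Finset.sum_const]
      field_simp
    have hceq : c = fun _ : Fin (n+1) => ((n : ℝ) + 1)⁻¹ := by
      apply (affineIndependent_iff_eq_of_fintype_affineCombination_eq ℝ p).mp hp _ _ hc1 hw0sum
      rw [Finset.affineCombination_eq_linear_combination _ _ _ hc1,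
        Finset.affineCombination_eq_linear_combination _ _ _ hw0sum, hcc, hpbar,
        Finset.smul_sum]
    calc ∑ i, lam i * f (xi i) ≤ ∑ i, lam i * ∑ j, mu i j * f (p j) := by
          apply Finset.sum_le_sum
          intro i _
          apply mul_le_mul_of_nonneg_left _ (hlam i)
          rw [← hmuc i]
          exact hf.map_sum_le (fun j _ => hmu0 i j) (hmu1 i) (fun j _ => hpmem j)
      _ = ∑ j, c j * f (p j) := by
          simp_rw [Finset.mul_sum, hc, Finset.sum_mul]
          rw [Finset.sum_comm]
          simp [mul_assoc]
      _ = ((n : ℝ) + 1)⁻¹ * ∑ j, f (p j) := by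
          rw [hceq, Finset.mul_sum]
end

section
/- Let T be a positive linear functional on C²(S) with T(p) = ∫_S p(x) dx for all polynomials p of degree at most 2. Then for every f ∈ C²(S), |∫_S f(x) dx − T(f)| ≤ ‖d²f‖_∞ · ∫_S ‖x − p̄‖² dx. -/
/-!
Taylor's theorem at the barycenter `pbar ∈ S` sandwiches `f` on `S` between the two quadratics
`Q e x = f pbar + df(pbar) (x - pbar) + e ‖x - pbar‖²` with `e = ∓ M / 2`, `M = d2normSup S f`.
The integral and `T` are both monotone and agree on these quadratics, so `∫_S f` and `T f` lie in
the same interval, of length `M ∫_S ‖x - pbar‖²`.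
-/

open MeasureTheory Set

noncomputable def d2normSup {n : ℕ} (S : Set (EuclideanSpace ℝ (Fin n)))
    (f : EuclideanSpace ℝ (Fin n) → ℝ) : ℝ :=
  sSup {r : ℝ | ∃ u ∈ S, ∃ v : EuclideanSpace ℝ (Fin n), ‖v‖ = 1 ∧
    r = |iteratedFDeriv ℝ 2 f u ![v, v]|}

theorem iteratedDeriv_comp_add_smul {𝕜 E F : Type*} [NontriviallyNormedField 𝕜]
    [NormedAddCommGroup E] [NormedSpace 𝕜 E] [NormedAddCommGroup F] [NormedSpace 𝕜 F]
    {f : E → F} {N : WithTop ℕ∞} (hf : ContDiff 𝕜 N f) (a w : E) {k : ℕ} (hk : k ≤ N) (t : 𝕜) :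
    iteratedDeriv k (fun s : 𝕜 => f (a + s • w)) t =
      iteratedFDeriv 𝕜 k f (a + t • w) (fun _ => w) := by
  have hline : (fun s : 𝕜 => f (a + s • w)) =
      (fun z => f (a + z)) ∘ (ContinuousLinearMap.id 𝕜 𝕜).smulRight w := by
    ext s; simp
  rw [iteratedDeriv_eq_iteratedFDeriv, hline, ContinuousLinearMap.iteratedFDeriv_comp_right
    (f := fun z => f (a + z)) _ (hf.comp (by fun_prop)) t hk]
  simp [iteratedFDeriv_comp_add_left]

theorem Convex.abs_sub_sub_fderiv_le {E : Type*} [NormedAddCommGroup E] [NormedSpace ℝ E]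
    {S : Set E} (hS : Convex ℝ S) {f : E → ℝ} (hf : ContDiff ℝ 2 f) {M : ℝ}
    (hM : ∀ u ∈ S, ∀ w, |iteratedFDeriv ℝ 2 f u (fun _ => w)| ≤ M * ‖w‖ ^ 2) {a x : E}
    (ha : a ∈ S) (hx : x ∈ S) :
    |f x - f a - fderiv ℝ f a (x - a)| ≤ M * ‖x - a‖ ^ 2 / 2 := by
  set φ : ℝ → ℝ := fun t => f (a + t • (x - a))
  have hφ : ContDiff ℝ 2 φ := hf.comp (by fun_prop)
  obtain ⟨ξ, hξ, hrem⟩ := taylor_mean_remainder_lagrange_iteratedDeriv (n := 1) zero_ne_one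
    hφ.contDiffOn
  have hφ' : iteratedDerivWithin 1 φ (uIcc 0 1) 0 = fderiv ℝ f a (x - a) := by
    rw [iteratedDerivWithin_eq_iteratedDeriv (uniqueDiffOn_uIcc zero_ne_one)
      (hφ.of_le (by norm_num)).contDiffAt (by simp),
      iteratedDeriv_comp_add_smul hf _ _ (by norm_num)]
    simp [iteratedFDeriv_one_apply]
  have hφ'' : iteratedDeriv 2 φ ξ = iteratedFDeriv ℝ 2 f (a + ξ • (x - a)) (fun _ => x - a) :=
    iteratedDeriv_comp_add_smul hf _ _ le_rfl ξ
  have hξS : a + ξ • (x - a) ∈ S := by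
    rw [uIoo_of_le zero_le_one] at hξ
    exact hS.add_smul_sub_mem ha hx (Ioo_subset_Icc_self hξ)
  have htaylor : taylorWithinEval φ 1 (uIcc 0 1) 0 1 = f a + fderiv ℝ f a (x - a) := by
    rw [taylor_within_apply, Finset.sum_range_succ, Finset.sum_range_one, hφ']
    simp [φ]
  have hremainder : f x - f a - fderiv ℝ f a (x - a) =
      iteratedFDeriv ℝ 2 f (a + ξ • (x - a)) (fun _ => x - a) / 2 := by
    calc f x - f a - fderiv ℝ f a (x - a) = φ 1 - taylorWithinEval φ 1 (uIcc 0 1) 0 1 := by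
          rw [htaylor]; simp [φ, sub_sub]
      _ = iteratedDeriv 2 φ ξ / 2 := by rw [hrem]; norm_num
      _ = _ := by rw [hφ'']
  rw [hremainder, abs_div, abs_two]
  linarith [hM _ hξS (x - a)]

theorem inv_card_smul_sum_mem_convexHull {ι E : Type*} [Fintype ι] [Nonempty ι] [AddCommGroup E]
    [Module ℝ E] (p : ι → E) : (Fintype.card ι : ℝ)⁻¹ • ∑ i, p i ∈ convexHull ℝ (range p) := by
  simpa [Finset.centerMass] using Finset.univ.centerMass_mem_convexHull (w := fun _ => (1 : ℝ))
    (fun _ _ => zero_le_one) (by simp [Fintype.card_pos]) (fun i _ => mem_range_self (f := p) i)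

open MvPolynomial in
theorem exists_totalDegree_le_two_eval_eq {ι : Type*} [Fintype ι] (c e : ℝ)
    (L : EuclideanSpace ℝ ι →L[ℝ] ℝ) (a : EuclideanSpace ℝ ι) :
    ∃ q : MvPolynomial ι ℝ, q.totalDegree ≤ 2 ∧
      ∀ x : EuclideanSpace ℝ ι, eval (fun i => x i) q = c + L (x - a) + e * ‖x - a‖ ^ 2 := by
  set g := (InnerProductSpace.toDual ℝ (EuclideanSpace ℝ ι)).symm L
  have hlin : ∀ i, (X i - C (a i) : MvPolynomial ι ℝ).totalDegree ≤ 1 := fun i =>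
    (totalDegree_sub_C_le _ _).trans (totalDegree_X i).le
  refine ⟨C c + ∑ i, C (g i) * (X i - C (a i)) + C e * ∑ i, (X i - C (a i)) ^ 2, ?_, ?_⟩
  · refine (totalDegree_add _ _).trans (max_le ((totalDegree_add _ _).trans (max_le ?_ ?_)) ?_)
    · simp
    · refine totalDegree_finsetSum_le fun i _ => (totalDegree_mul _ _).trans ?_
      rw [totalDegree_C, zero_add]
      exact (hlin i).trans one_le_two
    · refine (totalDegree_mul _ _).trans ?_
      rw [totalDegree_C, zero_add]
      exact totalDegree_finsetSum_le fun i _ => (totalDegree_pow _ 2).trans (by linarith [hlin i])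
  · intro x
    rw [← InnerProductSpace.toDual_symm_apply, PiLp.inner_apply, EuclideanSpace.norm_sq_eq]
    simp [g, mul_comm]

theorem bddAbove_abs_iteratedFDeriv_two {n : ℕ} {S : Set (EuclideanSpace ℝ (Fin n))}
    (hS : IsCompact S) {f : EuclideanSpace ℝ (Fin n) → ℝ} (hf : ContDiff ℝ 2 f) :
    BddAbove {r : ℝ | ∃ u ∈ S, ∃ v : EuclideanSpace ℝ (Fin n), ‖v‖ = 1 ∧
      r = |iteratedFDeriv ℝ 2 f u ![v, v]|} := by
  obtain ⟨C, hC⟩ := hS.exists_bound_of_continuousOn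
    (hf.continuous_iteratedFDeriv (m := 2) le_rfl).continuousOn
  refine ⟨C, ?_⟩
  rintro r ⟨u, hu, v, hv, rfl⟩
  calc |iteratedFDeriv ℝ 2 f u ![v, v]|
      ≤ ‖iteratedFDeriv ℝ 2 f u‖ * ∏ i : Fin 2, ‖![v, v] i‖ := (iteratedFDeriv ℝ 2 f u).le_opNorm _
    _ ≤ C := by simpa [Fin.prod_univ_two, hv] using hC u hu

theorem abs_iteratedFDeriv_two_le_d2normSup {n : ℕ} {S : Set (EuclideanSpace ℝ (Fin n))}
    (hS : IsCompact S) {f : EuclideanSpace ℝ (Fin n) → ℝ} (hf : ContDiff ℝ 2 f)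
    {u : EuclideanSpace ℝ (Fin n)} (hu : u ∈ S) (w : EuclideanSpace ℝ (Fin n)) :
    |iteratedFDeriv ℝ 2 f u (fun _ => w)| ≤ d2normSup S f * ‖w‖ ^ 2 := by
  rcases eq_or_ne w 0 with rfl | hw
  · simp [(iteratedFDeriv ℝ 2 f u).map_coord_zero (m := fun _ => 0) 0 rfl]
  have hw' : ‖w‖ ≠ 0 := norm_ne_zero_iff.2 hw
  set v := ‖w‖⁻¹ • w
  have hv : ‖v‖ = 1 := by rw [norm_smul, norm_inv, norm_norm, inv_mul_cancel₀ hw']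
  have hwv : (fun _ : Fin 2 => w) = fun i => ‖w‖ • ![v, v] i := by
    ext i : 1; fin_cases i <;> simp [v, smul_smul, mul_inv_cancel₀ hw']
  have hsup : |iteratedFDeriv ℝ 2 f u ![v, v]| ≤ d2normSup S f :=
    le_csSup (bddAbove_abs_iteratedFDeriv_two hS hf) ⟨u, hu, v, hv, rfl⟩
  rw [hwv, (iteratedFDeriv ℝ 2 f u).map_smul_univ (fun _ => ‖w‖), Fin.prod_const, smul_eq_mul,
    abs_mul, abs_pow, abs_norm, mul_comm]
  gcongr

theorem cubature_error_bound_general {n : ℕ}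
    (p : Fin (n + 1) → EuclideanSpace ℝ (Fin n))
    (S : Set (EuclideanSpace ℝ (Fin n))) (hS : S = convexHull ℝ (Set.range p))
    (pbar : EuclideanSpace ℝ (Fin n)) (hpbar : pbar = ((n : ℝ) + 1)⁻¹ • ∑ i, p i)
    (T : (EuclideanSpace ℝ (Fin n) → ℝ) → ℝ)
    (Tpos : ∀ f g : EuclideanSpace ℝ (Fin n) → ℝ, ContDiff ℝ 2 f → ContDiff ℝ 2 g →
      (∀ x ∈ S, f x ≤ g x) → T f ≤ T g)
    (Tpoly : ∀ q : MvPolynomial (Fin n) ℝ, q.totalDegree ≤ 2 →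
      T (fun x => MvPolynomial.eval (fun i => x i) q) =
        ∫ x in S, MvPolynomial.eval (fun i => x i) q)
    (f : EuclideanSpace ℝ (Fin n) → ℝ) (hf : ContDiff ℝ 2 f) :
    |(∫ x in S, f x) - T f| ≤ d2normSup S f * ∫ x in S, ‖x - pbar‖ ^ 2 := by
  have hSc : IsCompact S := hS ▸ (finite_range p).isCompact_convexHull (𝕜 := ℝ)
  have hpbarS : pbar ∈ S := by simpa [hS, hpbar] using inv_card_smul_sum_mem_convexHull p
  have hint : ∀ g : EuclideanSpace ℝ (Fin n) → ℝ, Continuous g → IntegrableOn g S := fun g hg =>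
    hg.continuousOn.integrableOn_compact hSc
  set M := d2normSup S f
  have hr : ContDiff ℝ 2 fun x => ‖x - pbar‖ ^ 2 := (contDiff_norm_sq ℝ).comp (by fun_prop)
  set Q : ℝ → EuclideanSpace ℝ (Fin n) → ℝ := fun e x =>
    f pbar + fderiv ℝ f pbar (x - pbar) + e * ‖x - pbar‖ ^ 2
  have hQ : ∀ e, ContDiff ℝ 2 (Q e) := fun e => by simp only [Q]; fun_prop
  have hTQ : ∀ e, T (Q e) = ∫ x in S, Q e x := fun e => by
    obtain ⟨q, hq, hqQ⟩ := exists_totalDegree_le_two_eval_eq (f pbar) e (fderiv ℝ f pbar) pbar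
    simpa only [hqQ] using Tpoly q hq
  have hIQ : ∀ e, ∫ x in S, Q e x = (∫ x in S, Q 0 x) + e * ∫ x in S, ‖x - pbar‖ ^ 2 := fun e => by
    rw [← integral_const_mul, ← integral_add (hint _ (hQ 0).continuous)
      ((hint _ hr.continuous).const_mul e)]
    simp [Q]
  have hfQ : ∀ x ∈ S, Q (-(M / 2)) x ≤ f x ∧ f x ≤ Q (M / 2) x := fun x hx => by
    have := (hS ▸ convex_convexHull ℝ _ : Convex ℝ S).abs_sub_sub_fderiv_le hf (M := M)
      (fun u hu => abs_iteratedFDeriv_two_le_d2normSup hSc hf hu) hpbarS hx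
    simp only [Q]
    constructor <;> linarith [abs_le.1 this]
  calc |(∫ x in S, f x) - T f|
      ≤ (∫ x in S, Q (M / 2) x) - ∫ x in S, Q (-(M / 2)) x := abs_sub_le_of_le_of_le
        (setIntegral_mono_on (hint _ (hQ _).continuous) (hint _ hf.continuous) hSc.measurableSet
          fun x hx => (hfQ x hx).1)
        (setIntegral_mono_on (hint _ hf.continuous) (hint _ (hQ _).continuous) hSc.measurableSet
          fun x hx => (hfQ x hx).2)
        (hTQ _ ▸ Tpos _ _ (hQ _) hf fun x hx => (hfQ x hx).1)
        (hTQ _ ▸ Tpos _ _ hf (hQ _) fun x hx => (hfQ x hx).2)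
    _ = M * ∫ x in S, ‖x - pbar‖ ^ 2 := by rw [hIQ (M / 2), hIQ (-(M / 2))]; ring

theorem cubature_error_bound {n : ℕ}
    (p : Fin (n + 1) → EuclideanSpace ℝ (Fin n)) (hp : AffineIndependent ℝ p)
    (S : Set (EuclideanSpace ℝ (Fin n))) (hS : S = convexHull ℝ (Set.range p))
    (pbar : EuclideanSpace ℝ (Fin n)) (hpbar : pbar = ((n : ℝ) + 1)⁻¹ • ∑ i, p i)
    (T : (EuclideanSpace ℝ (Fin n) → ℝ) → ℝ)
    (Tadd : ∀ f g : EuclideanSpace ℝ (Fin n) → ℝ, ContDiff ℝ 2 f → ContDiff ℝ 2 g →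
      T (f + g) = T f + T g)
    (Tsmul : ∀ (c : ℝ) (f : EuclideanSpace ℝ (Fin n) → ℝ), ContDiff ℝ 2 f →
      T (c • f) = c * T f)
    (Tpos : ∀ f g : EuclideanSpace ℝ (Fin n) → ℝ, ContDiff ℝ 2 f → ContDiff ℝ 2 g →
      (∀ x ∈ S, f x ≤ g x) → T f ≤ T g)
    (Tpoly : ∀ q : MvPolynomial (Fin n) ℝ, q.totalDegree ≤ 2 →
      T (fun x => MvPolynomial.eval (fun i => x i) q) =
        ∫ x in S, MvPolynomial.eval (fun i => x i) q)
    (f : EuclideanSpace ℝ (Fin n) → ℝ) (hf : ContDiff ℝ 2 f) :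
    |(∫ x in S, f x) - T f| ≤ d2normSup S f * ∫ x in S, ‖x - pbar‖ ^ 2 :=
  cubature_error_bound_general p S hS pbar hpbar T Tpos Tpoly f hf
end

section
/- For the unit simplex S₁ ⊆ ℝⁿ with barycenter p̄ = (1/(n+1),…,1/(n+1)), one has ∫_{S₁} ‖x − p̄‖² dx = n² / ((n+2)!·(n+1)). -/
/-! The integrand is `∑ᵢ (xᵢ - c)²` with `c = 1/(n+1)`, so only integrals of a function of one
coordinate over the simplex are needed. Slicing the `(m+1)`-dimensional simplex
`{x ≥ 0, ∑ x ≤ s}` at `xᵢ = t` leaves the `m`-dimensional simplex of size `s - t`, whose volume is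
`(s - t)ᵐ / m!` by induction on the dimension. So each coordinate has density `(1 - t)ᵐ / m!` on
`[0, 1]`, and `∫₀¹ (t - c)² (1 - t)ᵐ / m! dt = c² / (m+1)! - 2c / (m+2)! + 2 / (m+3)!`.
Summing `n = m + 1` such terms at `c = 1/(n+1)` gives `n² / ((n+2)! (n+1))`. -/

open MeasureTheory Set Finset
open scoped ENNReal Nat

def cornerSimplex (n : ℕ) (s : ℝ) : Set (Fin n → ℝ) := {x | (∀ i, 0 ≤ x i) ∧ ∑ i, x i ≤ s}

theorem isClosed_cornerSimplex (n : ℕ) (s : ℝ) : IsClosed (cornerSimplex n s) := by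
  simp only [cornerSimplex, ofPred_and, ofPred_forall]
  exact (isClosed_iInter fun i => isClosed_le continuous_const (continuous_apply i)).inter
    (isClosed_le (continuous_finsetSum _ fun i _ => continuous_apply i) continuous_const)

theorem isCompact_cornerSimplex (n : ℕ) (s : ℝ) : IsCompact (cornerSimplex n s) :=
  (isCompact_univ_pi fun _ => isCompact_Icc).of_isClosed_subset (isClosed_cornerSimplex n s)
    fun _ hx i _ => ⟨hx.1 i, (single_le_sum (fun j _ => hx.1 j) (mem_univ i)).trans hx.2⟩

theorem measurableSet_cornerSimplex (n : ℕ) (s : ℝ) : MeasurableSet (cornerSimplex n s) :=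
  (isClosed_cornerSimplex n s).measurableSet

theorem insertNth_mem_cornerSimplex_iff {n : ℕ} {s : ℝ} (i : Fin (n + 1)) (t : ℝ)
    (y : Fin n → ℝ) :
    i.insertNth t y ∈ cornerSimplex (n + 1) s ↔ t ∈ Icc 0 s ∧ y ∈ cornerSimplex n (s - t) := by
  simp only [cornerSimplex, mem_ofPred_eq, Set.mem_Icc, Fin.forall_iff_succAbove i,
    Fin.sum_univ_succAbove _ i, Fin.insertNth_apply_same, Fin.insertNth_apply_succAbove]
  constructor
  · rintro ⟨⟨ht, hy⟩, hsum⟩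
    exact ⟨⟨ht, by linarith [sum_nonneg fun j (_ : j ∈ Finset.univ) => hy j]⟩, hy, by linarith⟩
  · rintro ⟨⟨ht, -⟩, hy, hsum⟩
    exact ⟨⟨ht, hy⟩, by linarith⟩

theorem setLIntegral_cornerSimplex_comp_eval_eq_volume (n : ℕ) (s : ℝ) (i : Fin (n + 1))
    {g : ℝ → ℝ≥0∞} (hg : Measurable g) :
    ∫⁻ x in cornerSimplex (n + 1) s, g (x i) =
      ∫⁻ t in Icc 0 s, g t * volume (cornerSimplex n (s - t)) := by
  let e := MeasurableEquiv.piFinSuccAbove (fun _ : Fin (n + 1) => ℝ) i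
  have he : MeasurePreserving e.symm (volume.prod volume) volume :=
    (volume_preserving_piFinSuccAbove _ i).symm
  have hf : Measurable ((cornerSimplex (n + 1) s).indicator fun x => g (x i)) :=
    (hg.comp (measurable_pi_apply i)).indicator (measurableSet_cornerSimplex _ _)
  have hslice : ∀ p : ℝ × (Fin n → ℝ),
      (cornerSimplex (n + 1) s).indicator (fun x => g (x i)) (e.symm p) =
        (Icc 0 s).indicator g p.1 * (cornerSimplex n (s - p.1)).indicator 1 p.2 := by
    rintro ⟨t, y⟩
    change (cornerSimplex (n + 1) s).indicator (fun x => g (x i)) (i.insertNth t y) = _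
    by_cases h : i.insertNth t y ∈ cornerSimplex (n + 1) s
    · obtain ⟨ht, hy⟩ := (insertNth_mem_cornerSimplex_iff i t y).1 h
      simp [h, ht, hy]
    · rw [indicator_of_notMem h]
      rw [insertNth_mem_cornerSimplex_iff, not_and_or] at h
      rcases h with ht | hy
      · simp [ht]
      · simp [hy]
  rw [← lintegral_indicator (measurableSet_cornerSimplex _ _), ← he.lintegral_comp hf,
    lintegral_prod (fun p => (cornerSimplex (n + 1) s).indicator (fun x => g (x i)) (e.symm p))
      (hf.comp e.symm.measurable).aemeasurable,
    ← lintegral_indicator measurableSet_Icc]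
  congr 1 with t
  simp only [hslice]
  rw [lintegral_const_mul _ (measurable_one.indicator (measurableSet_cornerSimplex _ _)),
    lintegral_indicator_one (measurableSet_cornerSimplex _ _), indicator_mul_left]

theorem volume_cornerSimplex : ∀ (n : ℕ) {s : ℝ}, 0 ≤ s →
    volume (cornerSimplex n s) = ENNReal.ofReal (s ^ n / n !)
  | 0, s, hs => by
    have : cornerSimplex 0 s = univ := by ext x; simp [cornerSimplex, hs]
    simp [this, volume_pi]
  | n + 1, s, hs => by
    have hintegrable : IntegrableOn (fun t => (s - t) ^ n / n !) (Icc 0 s) :=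
      (by fun_prop : Continuous fun t : ℝ => (s - t) ^ n / n !).integrableOn_Icc
    calc volume (cornerSimplex (n + 1) s)
        = ∫⁻ t in Icc 0 s, volume (cornerSimplex n (s - t)) := by
          simpa using setLIntegral_cornerSimplex_comp_eval_eq_volume n s 0 (g := fun _ => 1)
            measurable_const
      _ = ∫⁻ t in Icc 0 s, ENNReal.ofReal ((s - t) ^ n / n !) :=
          setLIntegral_congr_fun measurableSet_Icc fun t ht =>
            volume_cornerSimplex n (sub_nonneg.2 ht.2)
      _ = ENNReal.ofReal (∫ t in 0..s, (s - t) ^ n / n !) := by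
          rw [intervalIntegral.integral_of_le hs, ← integral_Icc_eq_integral_Ioc,
            ofReal_integral_eq_lintegral_ofReal hintegrable
              (ae_restrict_of_forall_mem measurableSet_Icc
                fun t ht => by have := sub_nonneg.2 ht.2; positivity)]
      _ = ENNReal.ofReal (s ^ (n + 1) / (n + 1)!) := by
          rw [intervalIntegral.integral_div, intervalIntegral.integral_comp_sub_left (· ^ n)]
          simp [integral_pow, Nat.factorial_succ]
          field_simp

theorem setLIntegral_cornerSimplex_comp_eval (n : ℕ) (s : ℝ) (i : Fin (n + 1)) {g : ℝ → ℝ≥0∞}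
    (hg : Measurable g) :
    ∫⁻ x in cornerSimplex (n + 1) s, g (x i) =
      ∫⁻ t in Icc 0 s, g t * ENNReal.ofReal ((s - t) ^ n / n !) := by
  rw [setLIntegral_cornerSimplex_comp_eval_eq_volume n s i hg]
  exact setLIntegral_congr_fun measurableSet_Icc fun t ht => by
    rw [volume_cornerSimplex n (sub_nonneg.2 ht.2)]

theorem setIntegral_cornerSimplex_comp_eval (n : ℕ) {s : ℝ} (hs : 0 ≤ s) (i : Fin (n + 1))
    {g : ℝ → ℝ} (hg : Measurable g) (hg₀ : ∀ t, 0 ≤ g t) :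
    ∫ x in cornerSimplex (n + 1) s, g (x i) = ∫ t in 0..s, g t * ((s - t) ^ n / n !) := by
  have hnonneg : ∀ t ∈ Icc 0 s, 0 ≤ g t * ((s - t) ^ n / n !) := fun t ht => by
    have := hg₀ t; have := sub_nonneg.2 ht.2; positivity
  rw [integral_eq_lintegral_of_nonneg_ae (ae_of_all _ fun x => hg₀ _)
      (hg.comp (measurable_pi_apply i)).aestronglyMeasurable,
    intervalIntegral.integral_of_le hs, ← integral_Icc_eq_integral_Ioc,
    integral_eq_lintegral_of_nonneg_ae (ae_restrict_of_forall_mem measurableSet_Icc hnonneg)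
      (by fun_prop), setLIntegral_cornerSimplex_comp_eval n s i hg.ennreal_ofReal]
  congr 1
  exact setLIntegral_congr_fun measurableSet_Icc fun t _ => (ENNReal.ofReal_mul (hg₀ t)).symm

theorem integral_sq_sub_mul_one_sub_pow (m : ℕ) (c : ℝ) :
    ∫ t in (0 : ℝ)..1, (t - c) ^ 2 * ((1 - t) ^ m / m !) =
      c ^ 2 / (m + 1)! - 2 * c / (m + 2)! + 2 / (m + 3)! := by
  have hsub := intervalIntegral.integral_comp_sub_left
    (fun u : ℝ => (1 - u - c) ^ 2 * (u ^ m / m !)) (a := 0) (b := 1) 1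
  have hexpand : ∀ u : ℝ, (1 - u - c) ^ 2 * (u ^ m / m !) =
      ((1 - c) ^ 2 * u ^ m - 2 * (1 - c) * u ^ (m + 1) + u ^ (m + 2)) / m ! := fun u => by ring
  have hpow (k : ℕ) := intervalIntegral.intervalIntegrable_pow (μ := volume) (a := 0) (b := 1) k
  simp only [sub_sub_cancel, sub_self, sub_zero] at hsub
  rw [hsub]
  simp_rw [hexpand]
  rw [intervalIntegral.integral_div, intervalIntegral.integral_add
      (((hpow m).const_mul _).sub ((hpow (m + 1)).const_mul _)) (hpow (m + 2)),
    intervalIntegral.integral_sub ((hpow m).const_mul _) ((hpow (m + 1)).const_mul _),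
    intervalIntegral.integral_const_mul, intervalIntegral.integral_const_mul,
    integral_pow, integral_pow, integral_pow]
  simp only [Nat.factorial_succ]
  push_cast
  field_simp
  ring

theorem unit_simplex_second_moment {n : ℕ}
    (S1 : Set (EuclideanSpace ℝ (Fin n)))
    (hS1 : S1 = {x : EuclideanSpace ℝ (Fin n) | (∀ i, 0 ≤ x i) ∧ ∑ i, x i ≤ 1})
    (pbar : EuclideanSpace ℝ (Fin n)) (hpbar : ∀ i, pbar i = ((n : ℝ) + 1)⁻¹) :
    ∫ x in S1, ‖x - pbar‖ ^ 2 =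
      (n : ℝ) ^ 2 / ((Nat.factorial (n + 2) : ℝ) * ((n : ℝ) + 1)) := by
  set c : ℝ := ((n : ℝ) + 1)⁻¹
  have hnorm : ∀ x : EuclideanSpace ℝ (Fin n), ‖x - pbar‖ ^ 2 = ∑ i, (x i - c) ^ 2 := fun x => by
    simp [EuclideanSpace.real_norm_sq_eq, hpbar, c]
  have hintegrable :
      ∀ i, IntegrableOn (fun x : Fin n → ℝ => (x i - c) ^ 2) (cornerSimplex n 1) :=
    fun i => (by fun_prop : Continuous fun x : Fin n → ℝ => (x i - c) ^ 2).continuousOn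
      |>.integrableOn_compact (isCompact_cornerSimplex n 1)
  calc ∫ x in S1, ‖x - pbar‖ ^ 2 = ∫ x in cornerSimplex n 1, ∑ i, (x i - c) ^ 2 := by
        rw [hS1, ← (PiLp.volume_preserving_ofLp (Fin n)).setIntegral_preimage_emb
          (MeasurableEquiv.toLp 2 (Fin n → ℝ)).symm.measurableEmbedding]
        simp_rw [hnorm]
        rfl
    _ = ∑ i, ∫ x in cornerSimplex n 1, (x i - c) ^ 2 :=
        integral_finsetSum _ fun i _ => hintegrable i
    _ = _ := by
        cases n with
        | zero => simp
        | succ m =>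
          simp_rw [setIntegral_cornerSimplex_comp_eval m zero_le_one _
            (by fun_prop : Measurable fun t : ℝ => (t - c) ^ 2) fun t => sq_nonneg _,
            integral_sq_sub_mul_one_sub_pow]
          rw [sum_const, card_univ, Fintype.card_fin, nsmul_eq_mul]
          simp only [Nat.factorial_succ, c]
          push_cast
          field_simp
          ring
end

section
/- Let T ⊆ ℝ² be the unit triangle with vertices (0,0), (1,0), (0,1). For f ∈ C²(T) define T(f) := (1/24)(f(0,0)+f(0,1)+f(1,0)) + (3/8)·f(1/3,1/3). Then |∬_T f(x,y) dx dy − T(f)| ≤ (1/18)·‖d²f‖_∞. -/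
/-!
Expand `f` to first order about the centroid `c = (1/3, 1/3)`: `f = f c + L (u - c) + R u`, where
Taylor's formula along segments (which stay in the convex triangle) gives
`|R u| ≤ (M / 2) ‖u - c‖²` with `M = ‖d²f‖_∞`. The integral over `T` and the rule both send the
affine part to `f c / 2` (`c` is the centroid, and the vertex offsets from `c` sum to zero), so the
error is `∫ R - Q R`. As the weights of `Q` are positive, each of `|∫ R|` and `|Q R|` is at most
`M / 2` times `∫_T ‖u - c‖² = Q (‖· - c‖²) = 1/18`.
-/

open MeasureTheory

open Set

theorem norm_image_sub_sub_smul_deriv_le_segment {E : Type*} [NormedAddCommGroup E]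
    [NormedSpace ℝ E] {g g' g'' : ℝ → E} {a b C : ℝ}
    (hg : ∀ t ∈ Icc a b, HasDerivWithinAt g (g' t) (Icc a b) t)
    (hg' : ∀ t ∈ Icc a b, HasDerivWithinAt g' (g'' t) (Icc a b) t)
    (bound : ∀ t ∈ Ico a b, ‖g'' t‖ ≤ C) :
    ∀ x ∈ Icc a b, ‖g x - g a - (x - a) • g' a‖ ≤ C / 2 * (x - a) ^ 2 := by
  have hderiv : ∀ t ∈ Icc a b, HasDerivWithinAt (fun t => g t - g a - (t - a) • g' a)
      (g' t - g' a) (Icc a b) t := fun t ht => by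
    have := ((hg t ht).sub_const (g a)).sub (((hasDerivAt_id t).sub_const a).smul_const
      (g' a)).hasDerivWithinAt
    simp only [id, one_smul] at this
    exact this
  have hB : ∀ t, HasDerivAt (fun t => C / 2 * (t - a) ^ 2) (C * (t - a)) t := fun t => by
    have := (((hasDerivAt_id' t).sub_const a).fun_pow 2).const_mul (C / 2)
    exact this.congr_deriv (by norm_num; ring)
  -- `‖g' t - g' a‖ ≤ C * (t - a)` by the mean value inequality; compare with the barrier
  -- `C / 2 * (t - a) ^ 2`
  refine image_norm_le_of_norm_deriv_right_le_deriv_boundary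
    (fun t ht => (hderiv t ht).continuousWithinAt)
    (fun t ht => (hderiv t (Ico_subset_Icc_self ht)).mono_of_mem_nhdsWithin
      (Icc_mem_nhdsGE_of_mem ht)) (by simp) hB
    (fun t ht => norm_image_sub_le_of_norm_deriv_le_segment' hg' bound t (Ico_subset_Icc_self ht))

theorem Convex.norm_sub_sub_fderiv_le {E F : Type*} [NormedAddCommGroup E] [NormedSpace ℝ E]
    [NormedAddCommGroup F] [NormedSpace ℝ F] {f : E → F} {s : Set E} (hs : Convex ℝ s)
    (hf : ContDiff ℝ 2 f) {M : ℝ}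
    (hM : ∀ x ∈ s, ∀ v, ‖fderiv ℝ (fderiv ℝ f) x v v‖ ≤ M * ‖v‖ ^ 2) {w u : E}
    (hw : w ∈ s) (hu : u ∈ s) :
    ‖f u - f w - fderiv ℝ f w (u - w)‖ ≤ M / 2 * ‖u - w‖ ^ 2 := by
  have hline : ∀ t : ℝ, HasDerivAt (fun t : ℝ => w + t • (u - w)) (u - w) t := fun t => by
    simpa using ((hasDerivAt_id t).smul_const (u - w)).const_add w
  have hf' : ∀ x, HasFDerivAt f (fderiv ℝ f x) x := fun x =>
    (hf.differentiable two_ne_zero x).hasFDerivAt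
  have hf'' : ∀ x, HasFDerivAt (fderiv ℝ f) (fderiv ℝ (fderiv ℝ f) x) x := fun x =>
    ((hf.fderiv_right (m := 1) le_rfl).differentiable one_ne_zero x).hasFDerivAt
  have key := norm_image_sub_sub_smul_deriv_le_segment (a := 0) (b := 1)
    (g := fun t => f (w + t • (u - w)))
    (g' := fun t => fderiv ℝ f (w + t • (u - w)) (u - w))
    (g'' := fun t => fderiv ℝ (fderiv ℝ f) (w + t • (u - w)) (u - w) (u - w))
    (fun t _ => ((hf' _).comp_hasDerivAt t (hline t)).hasDerivWithinAt)
    (fun t _ => (((ContinuousLinearMap.apply ℝ F (u - w)).hasFDerivAt).comp_hasDerivAt t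
      ((hf'' _).comp_hasDerivAt t (hline t))).hasDerivWithinAt)
    (fun t ht => hM _ (hs.add_smul_sub_mem hw hu (Ico_subset_Icc_self ht)) _)
    1 (right_mem_Icc.2 zero_le_one)
  simpa [div_mul_eq_mul_div] using key

theorem abs_fderiv_fderiv_le_d2normSup {n : ℕ} {S : Set (EuclideanSpace ℝ (Fin n))}
    (hS : IsCompact S) {f : EuclideanSpace ℝ (Fin n) → ℝ} (hf : ContDiff ℝ 2 f) {x}
    (hx : x ∈ S) (v : EuclideanSpace ℝ (Fin n)) :
    |fderiv ℝ (fderiv ℝ f) x v v| ≤ d2normSup S f * ‖v‖ ^ 2 := by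
  obtain ⟨C, hC⟩ := hS.exists_bound_of_continuousOn
    (hf.continuous_iteratedFDeriv le_rfl).continuousOn
  have hbdd : BddAbove {r : ℝ | ∃ u ∈ S, ∃ v : EuclideanSpace ℝ (Fin n), ‖v‖ = 1 ∧
      r = |iteratedFDeriv ℝ 2 f u ![v, v]|} := by
    refine ⟨C, ?_⟩
    rintro r ⟨u, hu, v, hv, rfl⟩
    calc |iteratedFDeriv ℝ 2 f u ![v, v]| ≤ ‖iteratedFDeriv ℝ 2 f u‖ * ∏ i, ‖![v, v] i‖ :=
          (iteratedFDeriv ℝ 2 f u).le_opNorm _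
      _ ≤ C := by simpa [Fin.prod_univ_two, hv] using hC u hu
  rcases eq_or_ne v 0 with rfl | hv
  · simp
  have hunit : ‖‖v‖⁻¹ • v‖ = 1 := by
    rw [norm_smul, norm_inv, norm_norm, inv_mul_cancel₀ (norm_ne_zero_iff.2 hv)]
  have hle : |iteratedFDeriv ℝ 2 f x ![‖v‖⁻¹ • v, ‖v‖⁻¹ • v]| ≤ d2normSup S f :=
    le_csSup hbdd ⟨x, hx, _, hunit, rfl⟩
  have hv' : 0 < ‖v‖ := norm_pos_iff.2 hv
  simp only [iteratedFDeriv_two_apply, Matrix.cons_val_zero, Matrix.cons_val_one, map_smul,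
    FunLike.coe_smul, Pi.smul_apply, smul_eq_mul, abs_mul, abs_inv, abs_norm] at hle
  refine (div_le_iff₀ (by positivity)).1 (le_of_eq_of_le ?_ hle)
  ring

theorem setIntegral_prod_fiberwise {α β E : Type*} [MeasurableSpace α] [MeasurableSpace β]
    [NormedAddCommGroup E] [NormedSpace ℝ E] {μ : Measure α} {ν : Measure β} [SFinite μ]
    [SFinite ν] {s : Set α} {t : α → Set β} (hs : MeasurableSet s)
    (ht : ∀ x, MeasurableSet (t x)) (hst : MeasurableSet {p : α × β | p.1 ∈ s ∧ p.2 ∈ t p.1})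
    {F : α × β → E} (hF : IntegrableOn F {p | p.1 ∈ s ∧ p.2 ∈ t p.1} (μ.prod ν)) :
    ∫ p in {p | p.1 ∈ s ∧ p.2 ∈ t p.1}, F p ∂μ.prod ν = ∫ x in s, ∫ y in t x, F (x, y) ∂ν ∂μ := by
  rw [← integral_indicator hst, integral_prod _ ((integrable_indicator_iff hst).2 hF),
    ← integral_indicator hs]
  congr 1 with x
  by_cases hx : x ∈ s
  · rw [indicator_of_mem hx, ← integral_indicator (ht x)]
    congr 1 with y
    by_cases hy : y ∈ t x <;> simp [indicator, hx, hy]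
  · simp [indicator, hx]

theorem integral_Icc_cubic (a b c d : ℝ) {u : ℝ} (hu : 0 ≤ u) :
    ∫ y in Icc 0 u, (a + b * y + c * y ^ 2 + d * y ^ 3) =
      a * u + b * u ^ 2 / 2 + c * u ^ 3 / 3 + d * u ^ 4 / 4 := by
  rw [integral_Icc_eq_integral_Ioc, ← intervalIntegral.integral_of_le hu,
    intervalIntegral.integral_eq_sub_of_hasDerivAt
      (f := fun y => a * y + b * y ^ 2 / 2 + c * y ^ 3 / 3 + d * y ^ 4 / 4)]
  · ring
  · intro y _
    exact (((hasDerivAt_id y).const_mul a |>.add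
      (((hasDerivAt_pow 2 y).const_mul b).div_const 2)) |>.add
      (((hasDerivAt_pow 3 y).const_mul c).div_const 3) |>.add
      (((hasDerivAt_pow 4 y).const_mul d).div_const 4)).congr_deriv (by push_cast; ring)
  · exact (by fun_prop : Continuous _).intervalIntegrable _ _

theorem EuclideanSpace.eq_of_apply_fin_two {u : EuclideanSpace ℝ (Fin 2)} {a b : ℝ}
    (h : u 0 = a ∧ u 1 = b) : u = !₂[a, b] := by
  ext i; fin_cases i <;> simp [h.1, h.2]

namespace UnitTriangle

def planeTriangle : Set (ℝ × ℝ) := {p | p.1 ∈ Icc 0 1 ∧ p.2 ∈ Icc 0 (1 - p.1)}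

theorem integral_planeTriangle_quadratic (a b c d e : ℝ) :
    ∫ p in planeTriangle, (a + b * p.1 + c * p.2 + d * p.1 ^ 2 + e * p.2 ^ 2) =
      a / 2 + b / 6 + c / 6 + d / 12 + e / 12 := by
  have hmeas : MeasurableSet planeTriangle :=
    (measurableSet_Icc.preimage measurable_fst).inter
      (measurableSet_le measurable_const measurable_snd |>.inter
        (measurableSet_le measurable_snd (measurable_const.sub measurable_fst)))
  have hsub : planeTriangle ⊆ Icc 0 1 ×ˢ Icc 0 1 := fun p ⟨⟨h0, h1⟩, h2, h3⟩ =>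
    ⟨⟨h0, h1⟩, h2, by linarith⟩
  rw [Measure.volume_eq_prod, planeTriangle, setIntegral_prod_fiberwise measurableSet_Icc
    (fun _ => measurableSet_Icc) hmeas
    (((by fun_prop : Continuous _).continuousOn.integrableOn_compact
      (isCompact_Icc.prod isCompact_Icc)).mono_set hsub)]
  rw [setIntegral_congr_fun measurableSet_Icc (g := fun x => (a + c / 2 + e / 3) +
    (b - a - c - e) * x + (d - b + c / 2 + e) * x ^ 2 + (-d - e / 3) * x ^ 3)]
  · rw [integral_Icc_cubic _ _ _ _ zero_le_one]
    ring
  · intro x hx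
    calc ∫ y in Icc 0 (1 - x), (a + b * x + c * y + d * x ^ 2 + e * y ^ 2)
        = ∫ y in Icc 0 (1 - x), (a + b * x + d * x ^ 2 + c * y + e * y ^ 2 + 0 * y ^ 3) := by
          congr 1 with y; ring
      _ = _ := by rw [integral_Icc_cubic _ _ _ _ (sub_nonneg.2 hx.2)]; ring

def unitTriangle : Set (EuclideanSpace ℝ (Fin 2)) := {u | u 0 ∈ Icc 0 1 ∧ u 1 ∈ Icc 0 (1 - u 0)}

noncomputable def toPlane : EuclideanSpace ℝ (Fin 2) ≃ᵐ ℝ × ℝ :=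
  (MeasurableEquiv.toLp 2 (Fin 2 → ℝ)).symm.trans (MeasurableEquiv.piFinTwo fun _ => ℝ)

theorem measurePreserving_toPlane : MeasurePreserving toPlane :=
  (volume_preserving_piFinTwo fun _ => ℝ).comp
    (EuclideanSpace.volume_preserving_symm_measurableEquiv_toLp (Fin 2))

theorem integral_unitTriangle_quadratic (a b c d e : ℝ) :
    ∫ u in unitTriangle, (a + b * u 0 + c * u 1 + d * u 0 ^ 2 + e * u 1 ^ 2) =
      a / 2 + b / 6 + c / 6 + d / 12 + e / 12 :=
  (measurePreserving_toPlane.setIntegral_preimage_emb toPlane.measurableEmbedding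
    (fun p => a + b * p.1 + c * p.2 + d * p.1 ^ 2 + e * p.2 ^ 2) planeTriangle).trans
    (integral_planeTriangle_quadratic a b c d e)

theorem convex_unitTriangle : Convex ℝ unitTriangle := by
  rintro x ⟨⟨hx0, -⟩, hx1, hx2⟩ y ⟨⟨hy0, -⟩, hy1, hy2⟩ a b ha hb hab
  simp only [unitTriangle, mem_ofPred_eq, mem_Icc, PiLp.add_apply, PiLp.smul_apply, smul_eq_mul]
  refine ⟨⟨by positivity, ?_⟩, by positivity, ?_⟩ <;> nlinarith

theorem convexHull_eq_unitTriangle :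
    convexHull ℝ {!₂[0, 0], !₂[1, 0], !₂[0, 1]} = unitTriangle := by
  refine (convexHull_min ?_ convex_unitTriangle).antisymm fun u ⟨⟨hu0, _⟩, hu1, hu2⟩ => ?_
  · rintro _ (rfl | rfl | rfl) <;> norm_num [unitTriangle]
  convert (convex_convexHull ℝ
      ({!₂[0, 0], !₂[1, 0], !₂[0, 1]} : Set (EuclideanSpace ℝ (Fin 2)))).sum_mem
    (t := Finset.univ) (w := ![1 - u 0 - u 1, u 0, u 1]) (z := ![!₂[0, 0], !₂[1, 0], !₂[0, 1]])
    (fun i _ => by fin_cases i <;> simp <;> linarith) (by simp [Fin.sum_univ_three]; ring)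
    (fun i _ => subset_convexHull ℝ _ (by fin_cases i <;> simp)) using 1
  ext i; fin_cases i <;> simp [Fin.sum_univ_three]

theorem isCompact_unitTriangle : IsCompact unitTriangle := by
  rw [← convexHull_eq_unitTriangle]
  exact (toFinite _).isCompact_convexHull ℝ

theorem measurableSet_unitTriangle : MeasurableSet unitTriangle :=
  isCompact_unitTriangle.isClosed.measurableSet

theorem _root_.Continuous.integrableOn_unitTriangle {g : EuclideanSpace ℝ (Fin 2) → ℝ}
    (hg : Continuous g) : IntegrableOn g unitTriangle :=
  hg.continuousOn.integrableOn_compact isCompact_unitTriangle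

noncomputable abbrev centroid : EuclideanSpace ℝ (Fin 2) := !₂[1 / 3, 1 / 3]

theorem centroid_mem_unitTriangle : centroid ∈ unitTriangle := by
  norm_num [unitTriangle]

theorem norm_sq_fin_two (x : EuclideanSpace ℝ (Fin 2)) : ‖x‖ ^ 2 = x 0 ^ 2 + x 1 ^ 2 := by
  simp [EuclideanSpace.norm_sq_eq, Fin.sum_univ_two]

theorem integral_unitTriangle_affine (c : ℝ) (L : EuclideanSpace ℝ (Fin 2) →L[ℝ] ℝ) :
    ∫ u in unitTriangle, (c + L (u - centroid)) = c / 2 := by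
  have hL : ∀ u : EuclideanSpace ℝ (Fin 2), c + L (u - centroid) =
      (c - L !₂[1, 0] / 3 - L !₂[0, 1] / 3) + L !₂[1, 0] * u 0 + L !₂[0, 1] * u 1 +
        0 * u 0 ^ 2 + 0 * u 1 ^ 2 := fun u => by
    have : u - centroid = (u 0 - 1 / 3) • !₂[1, 0] + (u 1 - 1 / 3) • !₂[0, 1] := by
      ext i; fin_cases i <;> simp
    rw [this, map_add, map_smul, map_smul, smul_eq_mul, smul_eq_mul]
    ring
  simp_rw [hL, integral_unitTriangle_quadratic]
  ring

theorem integral_unitTriangle_norm_sub_centroid_sq :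
    ∫ u in unitTriangle, ‖u - centroid‖ ^ 2 = 1 / 18 := by
  have h : ∀ u : EuclideanSpace ℝ (Fin 2), ‖u - centroid‖ ^ 2 =
      2 / 9 + (-2 / 3) * u 0 + (-2 / 3) * u 1 + 1 * u 0 ^ 2 + 1 * u 1 ^ 2 := fun u => by
    rw [norm_sq_fin_two]; simp; ring
  simp_rw [h, integral_unitTriangle_quadratic]
  norm_num

noncomputable def triangleCubature (f : EuclideanSpace ℝ (Fin 2) → ℝ) : ℝ :=
  1 / 24 * (f !₂[0, 0] + f !₂[0, 1] + f !₂[1, 0]) + 3 / 8 * f centroid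

theorem triangleCubature_sub (f g : EuclideanSpace ℝ (Fin 2) → ℝ) :
    triangleCubature (fun u => f u - g u) = triangleCubature f - triangleCubature g := by
  simp only [triangleCubature]
  ring

theorem triangleCubature_affine (c : ℝ) (L : EuclideanSpace ℝ (Fin 2) →L[ℝ] ℝ) :
    triangleCubature (fun u => c + L (u - centroid)) = c / 2 := by
  have hsum : (!₂[0, 0] - centroid) + (!₂[0, 1] - centroid) + (!₂[1, 0] - centroid) = 0 := by
    ext i; fin_cases i <;> norm_num
  have hL := congrArg L hsum
  simp only [map_add, map_zero] at hL
  simp only [triangleCubature, sub_self, map_zero]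
  linear_combination hL / 24

theorem abs_triangleCubature_le {g h : EuclideanSpace ℝ (Fin 2) → ℝ}
    (hgh : ∀ u ∈ unitTriangle, |g u| ≤ h u) : |triangleCubature g| ≤ triangleCubature h := by
  have h00 := hgh !₂[0, 0] (by norm_num [unitTriangle])
  have h01 := hgh !₂[0, 1] (by norm_num [unitTriangle])
  have h10 := hgh !₂[1, 0] (by norm_num [unitTriangle])
  have hc := hgh centroid centroid_mem_unitTriangle
  simp only [triangleCubature, abs_le] at *
  constructor <;> linarith

theorem triangleCubature_norm_sub_centroid_sq :
    triangleCubature (fun u => ‖u - centroid‖ ^ 2) = 1 / 18 := by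
  simp only [triangleCubature, norm_sq_fin_two]
  norm_num

theorem abs_integral_sub_triangleCubature_le {f : EuclideanSpace ℝ (Fin 2) → ℝ}
    (hf : Continuous f) (L : EuclideanSpace ℝ (Fin 2) →L[ℝ] ℝ) {K : ℝ}
    (hK : ∀ u ∈ unitTriangle, |f u - f centroid - L (u - centroid)| ≤ K * ‖u - centroid‖ ^ 2) :
    |(∫ u in unitTriangle, f u) - triangleCubature f| ≤ K / 9 := by
  set R := fun u => f u - (f centroid + L (u - centroid))
  have hR : ∀ u ∈ unitTriangle, |R u| ≤ K * ‖u - centroid‖ ^ 2 := fun u hu => by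
    simpa only [R, sub_add_eq_sub_sub] using hK u hu
  have hreduce : (∫ u in unitTriangle, f u) - triangleCubature f =
      (∫ u in unitTriangle, R u) - triangleCubature R := by
    rw [integral_sub hf.integrableOn_unitTriangle
      (by fun_prop : Continuous fun u => f centroid + L (u - centroid)).integrableOn_unitTriangle,
      triangleCubature_sub, integral_unitTriangle_affine, triangleCubature_affine]
    ring
  have hintegral : |∫ u in unitTriangle, R u| ≤ K / 18 := by
    refine (norm_integral_le_of_norm_le
      (by fun_prop : Continuous fun u => K * ‖u - centroid‖ ^ 2).integrableOn_unitTriangle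
      (ae_restrict_of_forall_mem measurableSet_unitTriangle fun u hu =>
        (Real.norm_eq_abs _).trans_le (hR u hu))).trans_eq ?_
    rw [integral_const_mul, integral_unitTriangle_norm_sub_centroid_sq]
    ring
  have hcubature : |triangleCubature R| ≤ K / 18 := by
    refine (abs_triangleCubature_le hR).trans_eq ?_
    have := triangleCubature_norm_sub_centroid_sq
    simp only [triangleCubature] at this ⊢
    linear_combination K * this
  rw [hreduce]
  linarith [abs_sub (∫ u in unitTriangle, R u) (triangleCubature R)]

end UnitTriangle

open UnitTriangle in
theorem triangle_cubature_error
    (v00 v10 v01 w : EuclideanSpace ℝ (Fin 2))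
    (hv00 : v00 0 = 0 ∧ v00 1 = 0) (hv10 : v10 0 = 1 ∧ v10 1 = 0)
    (hv01 : v01 0 = 0 ∧ v01 1 = 1) (hw : w 0 = 1 / 3 ∧ w 1 = 1 / 3)
    (T : Set (EuclideanSpace ℝ (Fin 2))) (hT : T = convexHull ℝ {v00, v10, v01})
    (f : EuclideanSpace ℝ (Fin 2) → ℝ) (hf : ContDiff ℝ 2 f) :
    |(∫ x in T, f x) -
        (1 / 24 * (f v00 + f v01 + f v10) + 3 / 8 * f w)| ≤
      1 / 18 * d2normSup T f := by
  obtain rfl := EuclideanSpace.eq_of_apply_fin_two hv00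
  obtain rfl := EuclideanSpace.eq_of_apply_fin_two hv10
  obtain rfl := EuclideanSpace.eq_of_apply_fin_two hv01
  obtain rfl := EuclideanSpace.eq_of_apply_fin_two hw
  rw [convexHull_eq_unitTriangle] at hT
  subst hT
  have hTaylor : ∀ u ∈ unitTriangle, |f u - f centroid - fderiv ℝ f centroid (u - centroid)| ≤
      d2normSup unitTriangle f / 2 * ‖u - centroid‖ ^ 2 := fun u hu =>
    convex_unitTriangle.norm_sub_sub_fderiv_le hf
      (fun x hx v => abs_fderiv_fderiv_le_d2normSup isCompact_unitTriangle hf hx v)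
      centroid_mem_unitTriangle hu
  calc _ ≤ d2normSup unitTriangle f / 2 / 9 :=
        abs_integral_sub_triangleCubature_le hf.continuous _ hTaylor
    _ = _ := by ring
end
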